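/- arXiv:2408.08598 — 2 statements merged into one kernel-verified Lean document; each statement's English description precedes it below -/
import Mathlib

section
/- Let G be a finite simple graph. If G contains an even core W such that the induced subgraph G[W] has an odd number of edges, then b_2(G) > r_2(G)/2, i.e., b_2(G) ≥ r_2(G)/2 + 1. -/
open Finset

/-- The number of bicliques in the collection `f` that cover the pair `(u, v)`. -/
noncomputable def coversCount {V : Type*} {m : ℕ} (f : Fin m → Finset V × Finset V) (u v : V) : ℕ :=
  Nat.card {i : Fin m // (u ∈ (f i).1 ∧ v ∈ (f i).2) ∨ (u ∈ (f i).2 ∧ v ∈ (f i).1)}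

/-- `f` is an odd cover of `G`: a collection of bicliques (pairs of disjoint finite sets of
vertices) covering each edge of `G` an odd number of times and each nonedge an even number
of times. -/
def IsOddCover {V : Type*} (G : SimpleGraph V) {m : ℕ}
    (f : Fin m → Finset V × Finset V) : Prop :=
  (∀ i, Disjoint (f i).1 (f i).2) ∧
  ∀ u v : V, u ≠ v → (G.Adj u v ↔ Odd (coversCount f u v))

/-- `b2 G` is the minimum cardinality of an odd cover of `G`. -/
noncomputable def b2 {V : Type*} (G : SimpleGraph V) : ℕ :=
  sInf {m : ℕ | ∃ f : Fin m → Finset V × Finset V, IsOddCover G f}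

/-- `r2 G` is the rank over `𝔽₂` of the adjacency matrix of `G`. -/
noncomputable def r2 {V : Type*} [Fintype V] (G : SimpleGraph V) : ℕ :=
  letI := Classical.decRel G.Adj
  (SimpleGraph.adjMatrix (ZMod 2) G).rank

/-- Disjoint union of an indexed family of graphs, on the sigma type of the vertex types. -/
def sigmaSum {ι : Type*} {α : ι → Type*} (G : (i : ι) → SimpleGraph (α i)) :
    SimpleGraph ((i : ι) × α i) where
  Adj x y := ∃ (i : ι) (a b : α i), (G i).Adj a b ∧ x = ⟨i, a⟩ ∧ y = ⟨i, b⟩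
  symm := by constructor; rintro x y ⟨i, a, b, h, rfl, rfl⟩; exact ⟨i, b, a, h.symm, rfl, rfl⟩
  loopless := by
    constructor
    rintro x ⟨i, a, b, h, rfl, h2⟩
    obtain ⟨-, h3⟩ := Sigma.mk.inj_iff.mp h2
    exact (G i).loopless.irrefl a (by cases h3; exact h)


/-!
Over `𝔽₂`, an odd cover `(Xᵢ, Yᵢ)_{i < m}` writes the adjacency matrix as
`A = ∑ᵢ (xᵢ yᵢᵀ + yᵢ xᵢᵀ) = M Nᵀ`, where the `2m` columns of `M` are the indicator vectors
`xᵢ, yᵢ` of the sides and `N` is `M` with the two sides of each biclique swapped; hence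
`rank A ≤ 2m`. If equality held, `M` would be injective, so the even core (`A w = 0` for the
indicator `w` of `W`) would force `Nᵀ w = 0`: every `|Xᵢ ∩ W|` is even. Counting the edges
inside `W` biclique by biclique gives `|E(G[W])| ≡ ∑ᵢ |Xᵢ ∩ W| |Yᵢ ∩ W| (mod 2)`, which would
then be even, whereas it is odd. So `rank A < 2m` for every odd cover.
-/

open Matrix

theorem Matrix.rank_mul_lt_card_of_mulVec_eq_zero {K l ι n : Type*} [Field K] [Fintype ι]
    [Fintype n] (A : Matrix l ι K) (B : Matrix ι n K) {w : n → K} (hw : (A * B) *ᵥ w = 0)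
    (hBw : B *ᵥ w ≠ 0) : (A * B).rank < Fintype.card ι := by
  refine (rank_mul_le_left A B).trans_lt <| (rank_le_card_width A).lt_of_ne fun hA => hBw ?_
  have hinj : Function.Injective A.mulVec := by
    rw [mulVec_injective_iff, linearIndependent_iff_card_eq_finrank_span, Set.finrank,
      ← rank_eq_finrank_span_cols, hA]
  exact hinj (by rwa [mulVec_mulVec, mulVec_zero])

section

variable {V : Type*}

section Indicators

variable [DecidableEq V]

def indicatorVec (s : Finset V) : V → ZMod 2 := fun v => if v ∈ s then 1 else 0

lemma indicatorVec_dotProduct [Fintype V] (s t : Finset V) :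
    indicatorVec s ⬝ᵥ indicatorVec t = #(s ∩ t) := by
  simp [indicatorVec, dotProduct, Finset.inter_comm]

def bicliqueEdges (X Y : Finset V) : Finset (Sym2 V) := image₂ Sym2.mk X Y

lemma mk_mem_bicliqueEdges {X Y : Finset V} {u v : V} :
    s(u, v) ∈ bicliqueEdges X Y ↔ (u ∈ X ∧ v ∈ Y) ∨ (u ∈ Y ∧ v ∈ X) := by
  simp only [bicliqueEdges, mem_image₂, Sym2.eq_iff]
  constructor
  · rintro ⟨a, ha, b, hb, ⟨rfl, rfl⟩ | ⟨rfl, rfl⟩⟩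
    exacts [.inl ⟨ha, hb⟩, .inr ⟨hb, ha⟩]
  · rintro (⟨hu, hv⟩ | ⟨hu, hv⟩)
    exacts [⟨u, hu, v, hv, .inl ⟨rfl, rfl⟩⟩, ⟨v, hv, u, hu, .inr ⟨rfl, rfl⟩⟩]

lemma bicliqueEdges_inter_sym2 (X Y W : Finset V) :
    bicliqueEdges X Y ∩ W.sym2 = bicliqueEdges (X ∩ W) (Y ∩ W) := by
  ext e
  induction e using Sym2.ind with
  | _ u v =>
    simp only [mem_inter, mk_mem_bicliqueEdges, Finset.mk_mem_sym2_iff]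
    tauto

lemma card_bicliqueEdges {X Y : Finset V} (h : Disjoint X Y) :
    #(bicliqueEdges X Y) = #X * #Y := by
  refine card_image₂_iff.mpr ?_
  rintro ⟨a, b⟩ hab ⟨c, d⟩ hcd heq
  simp only [Set.mem_prod, mem_coe] at hab hcd
  rcases Sym2.eq_iff.mp heq with ⟨rfl, rfl⟩ | ⟨rfl, rfl⟩
  · rfl
  · exact absurd hcd.2 (disjoint_left.mp h hab.1)

lemma indicator_mk_mem_bicliqueEdges {X Y : Finset V} (h : Disjoint X Y) (u v : V) :
    (if s(u, v) ∈ bicliqueEdges X Y then 1 else 0 : ZMod 2) =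
      indicatorVec X u * indicatorVec Y v + indicatorVec Y u * indicatorVec X v := by
  have hu : u ∈ X → u ∉ Y := fun hx => disjoint_left.mp h hx
  have hv : v ∈ X → v ∉ Y := fun hx => disjoint_left.mp h hx
  by_cases huX : u ∈ X <;> by_cases hvX : v ∈ X <;> by_cases huY : u ∈ Y <;>
    by_cases hvY : v ∈ Y <;> simp_all [indicatorVec, mk_mem_bicliqueEdges]

def incidenceMatrix {ι : Type*} (s : ι → Finset V) : Matrix V ι (ZMod 2) :=
  Matrix.of fun v j => indicatorVec (s j) v

lemma incidenceMatrix_transpose_mulVec [Fintype V] {ι : Type*} (s : ι → Finset V)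
    (W : Finset V) : (incidenceMatrix s)ᵀ *ᵥ indicatorVec W = fun j => (#(s j ∩ W) : ZMod 2) := by
  ext j
  exact indicatorVec_dotProduct (s j) W

end Indicators

section OddCover

variable [DecidableEq V] {G : SimpleGraph V} {m : ℕ} {f : Fin m → Finset V × Finset V}

lemma coversCount_eq_card (f : Fin m → Finset V × Finset V) (u v : V) :
    coversCount f u v = #{i | s(u, v) ∈ bicliqueEdges (f i).1 (f i).2} := by
  simp only [coversCount, Nat.card_eq_fintype_card, Fintype.card_subtype, mk_mem_bicliqueEdges]

lemma IsOddCover.indicator_mem_edgeSet [DecidableRel G.Adj] (hf : IsOddCover G f) (e : Sym2 V) :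
    (if e ∈ G.edgeSet then 1 else 0 : ZMod 2) = #{i | e ∈ bicliqueEdges (f i).1 (f i).2} := by
  induction e using Sym2.ind with
  | _ u v =>
    simp only [← coversCount_eq_card, SimpleGraph.mem_edgeSet]
    obtain rfl | huv := eq_or_ne u v
    · have hloop : coversCount f u u = 0 := by
        simp only [coversCount_eq_card, mk_mem_bicliqueEdges, card_eq_zero,
          filter_eq_empty_iff, mem_univ, true_implies]
        rintro i (⟨h₁, h₂⟩ | ⟨h₂, h₁⟩) <;> exact disjoint_left.mp (hf.1 i) h₁ h₂
      simp [hloop]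
    · by_cases hodd : Odd (coversCount f u v)
      · rw [if_pos ((hf.2 u v huv).mpr hodd), ZMod.natCast_eq_one_iff_odd.mpr hodd]
      · rw [if_neg (mt (hf.2 u v huv).mp hodd),
          ZMod.natCast_eq_zero_iff_even.mpr (Nat.not_odd_iff_even.mp hodd)]

lemma IsOddCover.card_edges_within_eq_sum [Fintype V] [DecidableRel G.Adj]
    (hf : IsOddCover G f) (W : Finset V) :
    (#{e ∈ W.sym2 | e ∈ G.edgeSet} : ZMod 2) =
      ∑ i, (#((f i).1 ∩ W) : ZMod 2) * #((f i).2 ∩ W) := by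
  calc (#{e ∈ W.sym2 | e ∈ G.edgeSet} : ZMod 2)
      = ∑ e ∈ W.sym2, ∑ i, if e ∈ bicliqueEdges (f i).1 (f i).2 then 1 else 0 := by
        rw [natCast_card_filter]
        refine sum_congr rfl fun e _ => ?_
        rw [hf.indicator_mem_edgeSet, natCast_card_filter]
    _ = ∑ i, (#(bicliqueEdges (f i).1 (f i).2 ∩ W.sym2) : ZMod 2) := by
        rw [sum_comm]
        refine sum_congr rfl fun i _ => ?_
        rw [← natCast_card_filter, filter_mem_eq_inter, inter_comm]
    _ = _ := by
        refine sum_congr rfl fun i _ => ?_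
        rw [bicliqueEdges_inter_sym2, card_bicliqueEdges, Nat.cast_mul]
        exact (hf.1 i).mono inter_subset_left inter_subset_left

def bicliqueSides {m : ℕ} (f : Fin m → Finset V × Finset V) : Fin m ⊕ Fin m → Finset V :=
  Sum.elim (fun i => (f i).1) (fun i => (f i).2)

lemma IsOddCover.adjMatrix_eq [DecidableRel G.Adj] (hf : IsOddCover G f) :
    G.adjMatrix (ZMod 2) =
      incidenceMatrix (bicliqueSides f) * (incidenceMatrix (bicliqueSides f ∘ Sum.swap))ᵀ := by
  ext u v
  have := hf.indicator_mem_edgeSet s(u, v)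
  simp only [SimpleGraph.mem_edgeSet, natCast_card_filter] at this
  rw [SimpleGraph.adjMatrix_apply, this, mul_apply, Fintype.sum_sum_type, ← sum_add_distrib]
  refine sum_congr rfl fun i _ => ?_
  rw [indicator_mk_mem_bicliqueEdges (hf.1 i)]
  rfl

lemma adjMatrix_mulVec_indicatorVec_eq_zero [Fintype V] [DecidableRel G.Adj] (W : Finset V)
    (hcore : ∀ v : V, Even (Nat.card {w : V // w ∈ W ∧ G.Adj v w})) :
    G.adjMatrix (ZMod 2) *ᵥ indicatorVec W = 0 := by
  ext v
  have := ZMod.natCast_eq_zero_iff_even.mpr (hcore v)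
  rw [Nat.card_eq_fintype_card, Fintype.card_subtype, natCast_card_filter] at this
  rw [Pi.zero_apply, ← this, mulVec, dotProduct]
  refine sum_congr rfl fun u _ => ?_
  by_cases hu : u ∈ W <;> simp [indicatorVec, SimpleGraph.adjMatrix_apply, hu]

lemma IsOddCover.rank_adjMatrix_lt_two_mul [Fintype V] [DecidableRel G.Adj]
    (hf : IsOddCover G f) (W : Finset V) (hcore : ∀ v : V, Even (Nat.card {w : V // w ∈ W ∧ G.Adj v w}))
    (hodd : Odd (Nat.card {e : Sym2 V // e ∈ G.edgeSet ∧ ∀ v ∈ e, v ∈ W})) :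
    (G.adjMatrix (ZMod 2)).rank < 2 * m := by
  have hcard : Nat.card {e : Sym2 V // e ∈ G.edgeSet ∧ ∀ v ∈ e, v ∈ W} =
      #{e ∈ W.sym2 | e ∈ G.edgeSet} := by
    rw [Nat.card_eq_fintype_card, Fintype.card_subtype]
    congr 1
    ext e
    simp [mem_sym2_iff, and_comm]
  have hcross : (incidenceMatrix (bicliqueSides f ∘ Sum.swap))ᵀ *ᵥ indicatorVec W ≠ 0 := by
    intro h
    have hX : ∀ i, (#((f i).1 ∩ W) : ZMod 2) = 0 := fun i => by
      simpa [incidenceMatrix_transpose_mulVec, bicliqueSides] using congrFun h (.inr i)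
    have := hf.card_edges_within_eq_sum W
    simp only [hX, zero_mul, sum_const_zero, ← hcard] at this
    exact Nat.not_even_iff_odd.mpr hodd (ZMod.natCast_eq_zero_iff_even.mp this)
  have hker := adjMatrix_mulVec_indicatorVec_eq_zero W hcore
  rw [hf.adjMatrix_eq] at hker ⊢
  simpa [two_mul] using rank_mul_lt_card_of_mulVec_eq_zero _ _ hker hcross

end OddCover

lemma SimpleGraph.exists_isOddCover [Fintype V] (G : SimpleGraph V) :
    ∃ (m : ℕ) (f : Fin m → Finset V × Finset V), IsOddCover G f := by
  classical
  set E := G.edgeFinset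
  let e : Fin #E → Sym2 V := fun i => E.equivFin.symm i
  choose a b hab using fun i => (Sym2.exists.mp ⟨e i, rfl⟩ : ∃ x y, e i = s(x, y))
  have hadj : ∀ i, G.Adj (a i) (b i) := fun i => by
    rw [← mem_edgeSet, ← hab, ← mem_edgeFinset]; exact (E.equivFin.symm i).2
  have hcount : ∀ u v, #{i | s(u, v) = e i} = if G.Adj u v then 1 else 0 := by
    intro u v
    split_ifs with huv
    · rw [card_eq_one]
      refine ⟨E.equivFin ⟨s(u, v), G.mem_edgeFinset.mpr (G.mem_edgeSet.mpr huv)⟩, ?_⟩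
      ext i
      simp only [mem_filter, mem_univ, true_and, mem_singleton, e]
      rw [← Equiv.symm_apply_eq, Subtype.ext_iff, eq_comm]
    · rw [card_eq_zero, filter_eq_empty_iff]
      intro i _ h
      apply huv
      rw [← mem_edgeSet, h, ← mem_edgeFinset]
      exact (E.equivFin.symm i).2
  refine ⟨#E, fun i => ({a i}, {b i}), fun i => disjoint_singleton.mpr (hadj i).ne,
    fun u v huv => ?_⟩
  have hB : ∀ i, bicliqueEdges {a i} {b i} = {e i} := fun i => by
    simp [bicliqueEdges, hab]
  rw [coversCount_eq_card]
  simp only [hB, mem_singleton, hcount]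
  split_ifs with h <;> simp [h]

end

theorem stmt2_general {V : Type*} [Fintype V] (G : SimpleGraph V) (W : Finset V)
    (hcore : ∀ v : V, Even (Nat.card {w : V // w ∈ W ∧ G.Adj v w}))
    (hodd : Odd (Nat.card {e : Sym2 V // e ∈ G.edgeSet ∧ ∀ v ∈ e, v ∈ W})) :
    r2 G / 2 + 1 ≤ b2 G := by
  classical
  obtain ⟨m, f, hf⟩ := G.exists_isOddCover
  refine le_csInf ⟨m, f, hf⟩ ?_
  rintro m ⟨f, hf⟩
  have := hf.rank_adjMatrix_lt_two_mul W hcore hodd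
  unfold r2
  omega

/-- If `G` has an even core `W` (a nonempty set of vertices such that every
vertex of `G` has an even number of neighbors in `W`) inducing an odd number of edges, then
`b₂(G) ≥ r₂(G)/2 + 1`. -/
theorem stmt2 {V : Type*} [Fintype V] (G : SimpleGraph V) (W : Finset V)
    (hW : W.Nonempty)
    (hcore : ∀ v : V, Even (Nat.card {w : V // w ∈ W ∧ G.Adj v w}))
    (hodd : Odd (Nat.card {e : Sym2 V // e ∈ G.edgeSet ∧ ∀ v ∈ e, v ∈ W})) :
    r2 G / 2 + 1 ≤ b2 G :=
  stmt2_general G W hcore hodd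
end

section
/- Let G be a finite simple graph and let O be a perfect odd cover of G, i.e., an odd cover of G of cardinality r_2(G)/2. Then a nonempty subset W of V(G) is an even core in G if and only if, for every biclique (X, Y) in O, both |W ∩ X| and |W ∩ Y| are even. -/
open Finset

/-! Over `𝔽₂` an odd cover `(Xᵢ, Yᵢ)ᵢ` writes the adjacency matrix as
`A = ∑ᵢ (xᵢ yᵢᵀ + yᵢ xᵢᵀ)`, where `xᵢ, yᵢ` are the indicator vectors of `Xᵢ, Yᵢ`. Hence
`A w = ∑ᵢ (yᵢ ⬝ w) xᵢ + (xᵢ ⬝ w) yᵢ`, so the column space of `A` lies in the span of the `2m`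
vectors `xᵢ, yᵢ`. For a perfect cover `2m ≤ rank A`, so these vectors are linearly independent
and `A w = 0` exactly when every coefficient `xᵢ ⬝ w`, `yᵢ ⬝ w` vanishes. Taking `w` the indicator
of `W`, `(A w)ᵥ` is the parity of the number of neighbours of `v` in `W`, and `xᵢ ⬝ w` that of
`|W ∩ Xᵢ|`. -/

open Matrix

section Indicator

variable {V R : Type*} [Fintype V] [DecidableEq V] [NonAssocSemiring R]

lemma indicator_one_dotProduct_indicator_one (S T : Finset V) :
    (S : Set V).indicator (1 : V → R) ⬝ᵥ (T : Set V).indicator 1 = #(S ∩ T) := by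
  simp [dotProduct, Set.indicator_apply, ← ite_and, sum_boole, filter_and, inter_comm S T]

end Indicator

section RankOneSum

variable {ι n K : Type*} [Fintype ι] [Fintype n]

lemma sum_vecMulVec_mulVec [CommSemiring K] (g h : ι → n → K) (w : n → K) :
    (∑ j, vecMulVec (g j) (h j)) *ᵥ w = ∑ j, (h j ⬝ᵥ w) • g j := by
  simp [sum_mulVec, vecMulVec_mulVec]

variable [Field K]

lemma linearIndependent_of_card_le_rank_sum_vecMulVec {g h : ι → n → K}
    (hrank : Fintype.card ι ≤ (∑ j, vecMulVec (g j) (h j)).rank) : LinearIndependent K g := by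
  have hrange : LinearMap.range (∑ j, vecMulVec (g j) (h j)).mulVecLin ≤
      Submodule.span K (Set.range g) := by
    rintro _ ⟨w, rfl⟩
    rw [mulVecLin_apply, sum_vecMulVec_mulVec]
    exact Submodule.sum_mem _ fun j _ => Submodule.smul_mem _ _ (Submodule.subset_span ⟨j, rfl⟩)
  rw [linearIndependent_iff_card_eq_finrank_span]
  exact le_antisymm (hrank.trans (Submodule.finrank_mono hrange)) (finrank_range_le_card g)

lemma sum_vecMulVec_mulVec_eq_zero_iff {g h : ι → n → K}
    (hrank : Fintype.card ι ≤ (∑ j, vecMulVec (g j) (h j)).rank) (w : n → K) :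
    (∑ j, vecMulVec (g j) (h j)) *ᵥ w = 0 ↔ ∀ j, h j ⬝ᵥ w = 0 := by
  rw [sum_vecMulVec_mulVec]
  refine ⟨fun h0 => ?_, fun h0 => Finset.sum_eq_zero fun j _ => by rw [h0, zero_smul]⟩
  have hind : LinearIndependent K g := linearIndependent_of_card_le_rank_sum_vecMulVec hrank
  exact Fintype.linearIndependent_iff.mp hind (fun j => h j ⬝ᵥ w) h0

end RankOneSum

section Biclique

variable {V : Type*} (R : Type*) [NonAssocSemiring R]

noncomputable def bicliqueMatrix (p : Finset V × Finset V) : Matrix V V R :=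
  vecMulVec ((p.1 : Set V).indicator 1) ((p.2 : Set V).indicator 1) +
    vecMulVec ((p.2 : Set V).indicator 1) ((p.1 : Set V).indicator 1)

variable {R}

lemma bicliqueMatrix_apply [DecidableEq V] {X Y : Finset V} (hXY : Disjoint X Y) (u v : V) :
    bicliqueMatrix R (X, Y) u v = if (u ∈ X ∧ v ∈ Y) ∨ (u ∈ Y ∧ v ∈ X) then 1 else 0 := by
  have := Finset.disjoint_left.mp hXY
  by_cases hu : u ∈ X <;> by_cases hv : v ∈ X <;>
    simp_all [bicliqueMatrix, vecMulVec_apply, Set.indicator_apply]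

lemma sum_bicliqueMatrix_apply [DecidableEq V] {m : ℕ} {f : Fin m → Finset V × Finset V}
    (hf : ∀ i, Disjoint (f i).1 (f i).2) (u v : V) :
    (∑ i, bicliqueMatrix R (f i)) u v = coversCount f u v := by
  simp only [Matrix.sum_apply, fun i => bicliqueMatrix_apply (R := R) (hf i) u v]
  rw [Finset.sum_boole, coversCount, Nat.card_eq_fintype_card, Fintype.card_subtype]

lemma coversCount_self {m : ℕ} {f : Fin m → Finset V × Finset V}
    (hf : ∀ i, Disjoint (f i).1 (f i).2) (u : V) : coversCount f u u = 0 := by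
  refine Nat.card_eq_zero.mpr (Or.inl ⟨fun ⟨i, hi⟩ => ?_⟩)
  rcases hi with ⟨h1, h2⟩ | ⟨h2, h1⟩ <;> exact Finset.disjoint_left.mp (hf i) h1 h2

lemma IsOddCover.adjMatrix_eq_sum_bicliqueMatrix [DecidableEq V] {G : SimpleGraph V}
    [DecidableRel G.Adj] {m : ℕ} {f : Fin m → Finset V × Finset V} (hf : IsOddCover G f) :
    G.adjMatrix (ZMod 2) = ∑ i, bicliqueMatrix (ZMod 2) (f i) := by
  ext u v
  rw [sum_bicliqueMatrix_apply hf.1, SimpleGraph.adjMatrix_apply]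
  rcases eq_or_ne u v with rfl | huv
  · simp [coversCount_self hf.1]
  · by_cases hadj : G.Adj u v
    · rw [if_pos hadj, ZMod.natCast_eq_one_iff_odd.mpr ((hf.2 u v huv).mp hadj)]
    · rw [if_neg hadj, ZMod.natCast_eq_zero_iff_even.mpr]
      exact Nat.not_odd_iff_even.mp (mt (hf.2 u v huv).mpr hadj)

end Biclique

section OddCover

variable {V : Type*} [Fintype V] (G : SimpleGraph V)

lemma r2_eq_rank_adjMatrix [DecidableRel G.Adj] : r2 G = (G.adjMatrix (ZMod 2)).rank := by
  unfold r2
  congr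

lemma forall_even_card_adj_iff_adjMatrix_mulVec_eq_zero [DecidableEq V] [DecidableRel G.Adj]
    (W : Finset V) :
    (∀ v, Even (Nat.card {w : V // w ∈ W ∧ G.Adj v w})) ↔
      G.adjMatrix (ZMod 2) *ᵥ (W : Set V).indicator 1 = 0 := by
  rw [funext_iff]
  refine forall_congr' fun v => ?_
  simp [SimpleGraph.adjMatrix_mulVec_apply, Set.indicator_apply,
    Nat.card_eq_fintype_card, Fintype.card_subtype, ZMod.natCast_eq_zero_iff_even, filter_and,
    SimpleGraph.neighborFinset_eq_filter, inter_comm W]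

variable {G}

lemma IsOddCover.adjMatrix_mulVec_eq_zero_iff [DecidableEq V] [DecidableRel G.Adj] {m : ℕ}
    {f : Fin m → Finset V × Finset V} (hf : IsOddCover G f) (hm : 2 * m ≤ r2 G) (w : V → ZMod 2) :
    G.adjMatrix (ZMod 2) *ᵥ w = 0 ↔
      ∀ i, ((f i).1 : Set V).indicator 1 ⬝ᵥ w = 0 ∧ ((f i).2 : Set V).indicator 1 ⬝ᵥ w = 0 := by
  set x : Fin m → V → ZMod 2 := fun i => ((f i).1 : Set V).indicator 1
  set y : Fin m → V → ZMod 2 := fun i => ((f i).2 : Set V).indicator 1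
  have hA : G.adjMatrix (ZMod 2) = ∑ j, vecMulVec (Sum.elim x y j) (Sum.elim y x j) := by
    rw [hf.adjMatrix_eq_sum_bicliqueMatrix, Fintype.sum_sum_type, ← Finset.sum_add_distrib]
    rfl
  have hrank : Fintype.card (Fin m ⊕ Fin m) ≤
      (∑ j, vecMulVec (Sum.elim x y j) (Sum.elim y x j)).rank := by
    rw [← hA, ← r2_eq_rank_adjMatrix]
    simpa [two_mul] using hm
  rw [hA, sum_vecMulVec_mulVec_eq_zero_iff hrank, Sum.forall, ← forall_and]
  exact forall_congr' fun i => and_comm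

end OddCover

theorem stmt3_general {V : Type*} [Fintype V] [DecidableEq V] (G : SimpleGraph V)
    (f : Fin (r2 G / 2) → Finset V × Finset V) (hf : IsOddCover G f)
    (W : Finset V) :
    (∀ v : V, Even (Nat.card {w : V // w ∈ W ∧ G.Adj v w})) ↔
      (∀ i, Even ((W ∩ (f i).1).card) ∧ Even ((W ∩ (f i).2).card)) := by
  classical
  rw [forall_even_card_adj_iff_adjMatrix_mulVec_eq_zero,
    hf.adjMatrix_mulVec_eq_zero_iff (Nat.mul_div_le (r2 G) 2)]
  simp only [indicator_one_dotProduct_indicator_one, ZMod.natCast_eq_zero_iff_even, inter_comm]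

/-- If `𝒪` is a perfect odd cover of `G` (an odd cover of cardinality
`r₂(G)/2`), then a nonempty subset `W` of the vertices is an even core of `G` iff `W` has even
intersection with both partite sets of every biclique of `𝒪`. -/
theorem stmt3 {V : Type*} [Fintype V] [DecidableEq V] (G : SimpleGraph V)
    (f : Fin (r2 G / 2) → Finset V × Finset V) (hf : IsOddCover G f)
    (W : Finset V) (hW : W.Nonempty) :
    (∀ v : V, Even (Nat.card {w : V // w ∈ W ∧ G.Adj v w})) ↔
      (∀ i, Even ((W ∩ (f i).1).card) ∧ Even ((W ∩ (f i).2).card)) :=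
  stmt3_general G f hf W
end
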